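/- Consider the parity MDP with states {s0, q1, q2, q3, q4}, colors C(s0)=0, C(q1)=C(q2)=C(q3)=1, C(q4)=2, initial state s0, a single action a everywhere, and transitions: from s0 to q1 with probability 0.2 and to q2 with probability 0.8; from q1 to q3 with probability 0.8 and to q4 with probability 0.2; from q2 to q3 with probability 0.2 and to q4 with probability 0.8; q3 and q4 absorbing (self-loop with probability 1). Then: (i) this MDP admits a 0.68-risk-averse policy from s0 (the probability of reaching q4 from s0 is 0.2·0.2 + 0.8·0.8 = 0.68); (ii) under any policy, the state q1 is reached from s0 with positive probability; (iii) the probability of reaching q4 from q1 is only 0.2, so for p = 0.68 the state q1 admits no p-risk-averse policy as initial state (q1 is not winning for p = 0.68). -/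

import Mathlib

open scoped BigOperators

/-- A (finite) Markov decision process with partial transition function
`P : S × A → D(S) ∪ {⊥}` (represented via `Option`) and initial state `init`. -/
structure MDP (S A : Type) [Fintype S] [Fintype A] where
  P : S → A → Option (S → ℝ)
  init : S

/-- Well-formedness of an MDP: every defined `P s a` is a probability distribution,
and every state has at least one enabled action. -/
def MDP.WellFormed {S A : Type} [Fintype S] [Fintype A] (M : MDP S A) : Prop :=
  (∀ s a d, M.P s a = some d → (∀ s', 0 ≤ d s') ∧ ∑ s', d s' = 1) ∧
  (∀ s, ∃ a, M.P s a ≠ none)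

/-- A parity MDP: an MDP together with a coloring of its states. -/
structure ParityMDP (S A : Type) [Fintype S] [Fintype A] extends MDP S A where
  C : S → ℕ

/-- The transition kernel of an MDP as a real-valued function (`0` on disabled actions). -/
noncomputable def MDP.K {S A : Type} [Fintype S] [Fintype A] (M : MDP S A)
    (s : S) (a : A) (s' : S) : ℝ :=
  (M.P s a).elim 0 fun d => d s'

/-- A policy for an MDP: a map from finite histories to distributions over actions,
supported on actions enabled at the last state of the history. -/
structure MDP.Policy {S A : Type} [Fintype S] [Fintype A] (M : MDP S A) where
  f : List S → A → ℝ
  nonneg : ∀ h a, 0 ≤ f h a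
  sum_one : ∀ h, ∑ a, f h a = 1
  support : ∀ (h : List S) (s : S) (a : A), h.getLast? = some s → M.P s a = none → f h a = 0

/-- One-step probability, in the Markov chain over histories induced by kernel `K`
and (the action-distribution map) `fp`, of moving from history `h` to `h ++ [t']`. -/
noncomputable def stepP {T A : Type} [Fintype A] (K : T → A → T → ℝ)
    (fp : List T → A → ℝ) (h : List T) (t' : T) : ℝ :=
  h.getLast?.elim 0 fun t => ∑ a, fp h a * K t a t'

/-- Probability of the finite continuation `u` after history `h` in the induced chain. -/
noncomputable def contP {T A : Type} [Fintype A] (K : T → A → T → ℝ)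
    (fp : List T → A → ℝ) : List T → List T → ℝ
  | _, [] => 1
  | h, t' :: u => stepP K fp h t' * contP K fp (h ++ [t']) u

/-- `u` is a (nonempty) continuation of `h` hitting the set of histories `Tgt`
for the first time at its end. -/
def IsFirstHit {T : Type} (Tgt : Set (List T)) (h u : List T) : Prop :=
  u ≠ [] ∧ (h ++ u) ∈ Tgt ∧ ∀ v, v <+: u → v ≠ [] → v ≠ u → (h ++ v) ∉ Tgt

/-- Probability, from history `h`, of eventually reaching some proper extension of `h`
belonging to the set of histories `Tgt`, in the chain induced by `K` and `fp`. -/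
noncomputable def reachP {T A : Type} [Fintype A] (K : T → A → T → ℝ)
    (fp : List T → A → ℝ) (h : List T) (Tgt : Set (List T)) : ℝ :=
  ∑' u : {u : List T // IsFirstHit Tgt h u}, contP K fp h u.1

open scoped Classical in
/-- Probability, starting from state `t0`, of eventually visiting a state in `G`
(the start state itself counts). -/
noncomputable def visitP {T A : Type} [Fintype A] (K : T → A → T → ℝ)
    (fp : List T → A → ℝ) (t0 : T) (G : Set T) : ℝ :=
  if t0 ∈ G then 1 else reachP K fp [t0] {h | ∃ t, h.getLast? = some t ∧ t ∈ G}

/-- A policy over an arbitrary state space (used for derived/reachability MDPs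
whose kernels are given directly). -/
structure GPolicy (T A : Type) [Fintype A] where
  f : List T → A → ℝ
  nonneg : ∀ h a, 0 ≤ f h a
  sum_one : ∀ h, ∑ a, f h a = 1

/-- The optimal reachability value of state `t0` w.r.t. goal set `G`:
the supremum over policies of the probability of visiting `G` from `t0`. -/
noncomputable def valueP {T A : Type} [Fintype A] (K : T → A → T → ℝ)
    (G : Set T) (t0 : T) : ℝ :=
  ⨆ fp : GPolicy T A, visitP K fp.f t0 G

/-- `s'` is a possible successor of `s` in the MDP. -/
def MDP.IsStep {S A : Type} [Fintype S] [Fintype A] (M : MDP S A) (s s' : S) : Prop :=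
  ∃ a d, M.P s a = some d ∧ 0 < d s'

/-- `π` is an infinite trace of the MDP. -/
def MDP.IsInfTrace {S A : Type} [Fintype S] [Fintype A] (M : MDP S A) (π : ℕ → S) : Prop :=
  ∀ i, M.IsStep (π i) (π (i + 1))

/-- The prefix `π 0 … π n` of an infinite trace, as a list. -/
def prefixList {S : Type} (π : ℕ → S) (n : ℕ) : List S := (List.range (n + 1)).map π

/-- Along the infinite trace `π`, the labeling `l` strictly decreases at most `k` times. -/
def DecreasesAtMost {S : Type} (l : List S → ℕ) (π : ℕ → S) (k : ℕ) : Prop :=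
  ∀ n, ((Finset.range n).filter fun i => l (prefixList π (i + 1)) < l (prefixList π i)).card ≤ k

/-- The policy `fp`, with labelings `l` (goal colors) and `l'` (goal indicators),
is `p`-risk-averse for the parity MDP `M` from initial state `q`. -/
structure RiskAverseFrom {S A : Type} [Fintype S] [Fintype A] (M : ParityMDP S A)
    (fp : M.toMDP.Policy) (l : List S → ℕ) (l' : List S → Bool) (p : ℝ) (q : S) : Prop where
  /-- (1) there is `k` such that along every infinite trace, `l` decreases at most `k` times -/
  bounded : ∃ k, ∀ π : ℕ → S, π 0 = q → M.toMDP.IsInfTrace π → DecreasesAtMost l π k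
  /-- (2a) `l` is always even -/
  l_even : ∀ h : List S, Even (l h)
  /-- (2b) `l' h = true` implies the color of the last state is even and at least `l h` -/
  goal_label : ∀ (h : List S) (s : S), h.getLast? = some s → l' h = true →
    l h ≤ M.C s ∧ Even (M.C s)
  /-- (3) if the color of the last state is odd then it is smaller than `l h` -/
  odd_label : ∀ (h : List S) (s : S), h.getLast? = some s → Odd (M.C s) → M.C s < l h
  /-- (4) from the initial history and from every history labeled `true` by `l'`,
  some extension labeled `true` by `l'` is reached with probability at least `p` -/
  reach_goal : ∀ t : List S, t.head? = some q → (t = [q] ∨ l' t = true) →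
    p ≤ reachP M.toMDP.K fp.f t {h | l' h = true}

/-- The parity MDP `M` admits a `p`-risk-averse policy (from its initial state). -/
def AdmitsRA {S A : Type} [Fintype S] [Fintype A] (M : ParityMDP S A) (p : ℝ) : Prop :=
  ∃ (fp : M.toMDP.Policy) (l : List S → ℕ) (l' : List S → Bool),
    RiskAverseFrom M fp l l' p M.toMDP.init

/-- For risk level `p`, state `q` is `(k,c)`-winning: there is a `p`-risk-averse policy
from `q` with `l ε = c` along which goal colors decrease at most `k` times. -/
def kcWinning {S A : Type} [Fintype S] [Fintype A] (M : ParityMDP S A)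
    (p : ℝ) (k c : ℕ) (q : S) : Prop :=
  ∃ (fp : M.toMDP.Policy) (l : List S → ℕ) (l' : List S → Bool),
    RiskAverseFrom M fp l l' p q ∧ l [] = c ∧
    ∀ π : ℕ → S, π 0 = q → M.toMDP.IsInfTrace π → DecreasesAtMost l π k

/-- The least even upper bound on the colors occurring in the parity MDP. -/
noncomputable def cMaxEven {S A : Type} [Fintype S] [Fintype A] (M : ParityMDP S A) : ℕ :=
  sInf {n : ℕ | Even n ∧ ∀ s : S, M.C s ≤ n}

/-- States of the example parity MDP of Figure 2. -/
inductive St8 : Type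
  | s0 | q1 | q2 | q3 | q4
  deriving DecidableEq

instance : Fintype St8 where
  elems := {St8.s0, St8.q1, St8.q2, St8.q3, St8.q4}
  complete := by intro x; cases x <;> simp

/-- The distribution putting probability `px` on `x` and `py` on `y`. -/
noncomputable def d2 {S : Type} [DecidableEq S] (x y : S) (px py : ℝ) : S → ℝ :=
  fun s => (if s = x then px else 0) + (if s = y then py else 0)

/-- The Dirac distribution on `x`. -/
noncomputable def d1 {S : Type} [DecidableEq S] (x : S) : S → ℝ :=
  fun s => if s = x then 1 else 0

/-- Transition function of the example parity MDP of Figure 2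
(a single action `()` everywhere). -/
noncomputable def P8 : St8 → Unit → Option (St8 → ℝ)
  | .s0, _ => some (d2 .q1 .q2 0.2 0.8)
  | .q1, _ => some (d2 .q3 .q4 0.8 0.2)
  | .q2, _ => some (d2 .q3 .q4 0.2 0.8)
  | .q3, _ => some (d1 .q3)
  | .q4, _ => some (d1 .q4)

/-- Coloring of the example parity MDP of Figure 2. -/
def C8 : St8 → ℕ
  | .s0 => 0 | .q1 => 1 | .q2 => 1 | .q3 => 1 | .q4 => 2

/-- The example parity MDP of Figure 2. -/
noncomputable def M8 : ParityMDP St8 Unit := { P := P8, init := .s0, C := C8 }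

/-!
With a single action every policy induces the same Markov chain, so a continuation `u` of a
history ending in `t` has probability `pathProb M.chain t u`. A first hit of "the last state is
`x`" is a path `v ++ [x]` with `x ∉ v`; paths of positive probability stay in closed sets, and
`q3`, `q4` are absorbing. Hence the only positive first hits of `q4` from `s0` are `s0 q1 q4` and
`s0 q2 q4`, of total probability `0.2·0.2 + 0.8·0.8`. From `q1`, a goal set of histories with
even last colour (so never ending in `q3`) can be first hit with positive probability only along
`q1 q4 … q4`; these paths are prefixes of one another, so at most one of them is a first hit, and
the goal is reached from `q1` with probability at most `0.2 < 0.68`.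
-/

section FirstHit

variable {T A : Type} [Fintype A] {K : T → A → T → ℝ} {fp : List T → A → ℝ}
  {Tgt : Set (List T)} {h : List T}

theorem IsFirstHit.eq_of_prefix {u v : List T} (hu : IsFirstHit Tgt h u)
    (hv : IsFirstHit Tgt h v) (huv : u <+: v) : u = v :=
  by_contra fun hne => hv.2.2 u huv hu.1 hne hu.2.1

theorem isFirstHit_getLast?_eq_iff {x : T} {u : List T} :
    IsFirstHit {h | h.getLast? = some x} h u ↔ ∃ v, u = v ++ [x] ∧ x ∉ v := by
  constructor
  · rintro ⟨hu, hlast, hfirst⟩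
    have hlast' : u.getLast? = some x := (List.getLast?_append_of_ne_nil h hu).symm.trans hlast
    refine ⟨u.dropLast, (List.dropLast_append_getLast? x hlast').symm, fun hx => ?_⟩
    obtain ⟨a, b, hab⟩ := List.append_of_mem hx
    have hu_eq : u = a ++ [x] ++ (b ++ [x]) := by
      rw [← List.dropLast_append_getLast? x hlast', hab]; simp
    refine hfirst (a ++ [x]) ⟨b ++ [x], hu_eq.symm⟩ (by simp) ?_ (by simp)
    intro hax
    rw [hax] at hu_eq
    simpa using congrArg List.length hu_eq
  · rintro ⟨v, rfl, hxv⟩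
    refine ⟨by simp, by simp, fun w hw hw0 hwu hwx => ?_⟩
    rcases List.prefix_concat_iff.mp hw with rfl | hwv
    · exact hwu rfl
    · have hw_last : w.getLast? = some x := (List.getLast?_append_of_ne_nil h hw0).symm.trans hwx
      exact hxv (hwv.subset (List.mem_of_getLast? hw_last))

theorem reachP_eq_sum (s : Finset (List T)) (hs : ∀ u ∈ s, IsFirstHit Tgt h u)
    (hzero : ∀ u, IsFirstHit Tgt h u → u ∉ s → contP K fp h u = 0) :
    reachP K fp h Tgt = ∑ u ∈ s, contP K fp h u := by
  classical
  change ∑' u : ({u | IsFirstHit Tgt h u} : Set (List T)), contP K fp h u = _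
  rw [tsum_subtype, tsum_eq_sum (s := s)]
  · exact Finset.sum_congr rfl fun u hu => if_pos (hs u hu)
  · intro u hu
    by_cases hfh : IsFirstHit Tgt h u
    · exact (if_pos hfh).trans (hzero u hfh hu)
    · exact if_neg hfh

theorem reachP_eq_of_unique {u₀ : List T} (hu₀ : IsFirstHit Tgt h u₀)
    (huniq : ∀ u, IsFirstHit Tgt h u → contP K fp h u ≠ 0 → u = u₀) :
    reachP K fp h Tgt = contP K fp h u₀ := by
  rw [reachP_eq_sum {u₀} (by simpa using hu₀) fun u hu hu₀' =>
    by_contra fun hne => hu₀' (Finset.mem_singleton.mpr (huniq u hu hne)), Finset.sum_singleton]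

theorem reachP_le_of_unique {c : ℝ} (hc : 0 ≤ c)
    (huniq : ∀ u v, IsFirstHit Tgt h u → IsFirstHit Tgt h v →
      contP K fp h u ≠ 0 → contP K fp h v ≠ 0 → u = v)
    (hle : ∀ u, IsFirstHit Tgt h u → contP K fp h u ≠ 0 → contP K fp h u ≤ c) :
    reachP K fp h Tgt ≤ c := by
  by_cases hpos : ∃ u₀, IsFirstHit Tgt h u₀ ∧ contP K fp h u₀ ≠ 0
  · obtain ⟨u₀, hu₀, hne⟩ := hpos
    rw [reachP_eq_of_unique hu₀ fun u hu h0 => huniq u u₀ hu hu₀ h0 hne]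
    exact hle u₀ hu₀ hne
  · push Not at hpos
    rw [reachP_eq_sum ∅ (by simp) fun u hu _ => hpos u hu, Finset.sum_empty]
    exact hc

end FirstHit

section PathProb

variable {T : Type} {k : T → T → ℝ}

def pathProb (k : T → T → ℝ) : T → List T → ℝ
  | _, [] => 1
  | t, t' :: u => k t t' * pathProb k t' u

def ClosedUnder (k : T → T → ℝ) (Z : Set T) : Prop :=
  ∀ a ∈ Z, ∀ b, k a b ≠ 0 → b ∈ Z

theorem pathProb_replicate (t : T) (n : ℕ) :
    pathProb k t (List.replicate n t) = k t t ^ n := by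
  induction n with
  | zero => rfl
  | succ n ih => rw [List.replicate_succ, pathProb, ih, pow_succ']

theorem isChain_of_pathProb_ne_zero :
    ∀ {t : T} {u : List T}, pathProb k t u ≠ 0 → (t :: u).IsChain (fun a b => k a b ≠ 0)
  | _, [], _ => List.isChain_singleton _
  | _, _ :: _, hne => by
    rw [pathProb, mul_ne_zero_iff] at hne
    exact List.isChain_cons_cons.mpr ⟨hne.1, isChain_of_pathProb_ne_zero hne.2⟩

theorem ClosedUnder.forall_mem_of_pathProb_ne_zero {Z : Set T} (hZ : ClosedUnder k Z)
    {t : T} {u : List T} (ht : t ∈ Z) (hne : pathProb k t u ≠ 0) : ∀ y ∈ u, y ∈ Z :=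
  (isChain_of_pathProb_ne_zero hne).cons_induction (· ∈ Z) u (fun a b hab ha => hZ a ha b hab) ht

theorem ClosedUnder.eq_replicate_of_pathProb_ne_zero {x : T} (hx : ClosedUnder k {x})
    {u : List T} (hne : pathProb k x u ≠ 0) : u = List.replicate u.length x :=
  List.eq_replicate_iff.mpr ⟨rfl, hx.forall_mem_of_pathProb_ne_zero rfl hne⟩

end PathProb

section SingleAction

variable {S A : Type} [Fintype S] [Fintype A] [Unique A] {M : MDP S A}

noncomputable def MDP.chain (M : MDP S A) (s s' : S) : ℝ := M.K s default s'

theorem MDP.Policy.contP_eq_pathProb (fp : M.Policy) :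
    ∀ {h : List S} {t : S} (u : List S), h.getLast? = some t →
      contP M.K fp.f h u = pathProb M.chain t u
  | _, _, [], _ => rfl
  | h, t, t' :: u, hl => by
    have hstep : stepP M.K fp.f h t' = M.chain t t' := by
      have h1 := fp.sum_one h
      rw [Fintype.sum_unique] at h1
      simp [stepP, hl, h1, MDP.chain]
    rw [contP, pathProb, hstep, fp.contP_eq_pathProb u List.getLast?_concat]

theorem MDP.Policy.contP_singleton_eq_pathProb (fp : M.Policy) (t : S) (u : List S) :
    contP M.K fp.f [t] u = pathProb M.chain t u :=
  fp.contP_eq_pathProb u rfl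

theorem MDP.Policy.reachP_getLast?_eq_one (fp : M.Policy) {x : S} (hxx : M.chain x x = 1)
    (hx : ClosedUnder M.chain {x}) {h : List S} (hl : h.getLast? = some x) :
    reachP M.K fp.f h {h | h.getLast? = some x} = 1 := by
  rw [reachP_eq_of_unique (u₀ := [x]) (isFirstHit_getLast?_eq_iff.mpr ⟨[], rfl, by simp⟩),
    fp.contP_eq_pathProb _ hl, pathProb, pathProb, hxx, mul_one]
  intro u hu hne
  obtain ⟨v, rfl, hxv⟩ := isFirstHit_getLast?_eq_iff.mp hu
  rw [fp.contP_eq_pathProb _ hl] at hne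
  have hv : ∀ y ∈ v, y = x := fun y hy =>
    hx.forall_mem_of_pathProb_ne_zero rfl hne y (List.mem_append_left _ hy)
  rw [List.eq_nil_iff_forall_not_mem.mpr fun y hy => hxv (hv y hy ▸ hy), List.nil_append]

end SingleAction

section Distributions

variable {S : Type} [DecidableEq S]

theorem d1_nonneg {x : S} (s : S) : 0 ≤ d1 x s := by
  unfold d1; split_ifs <;> norm_num

theorem sum_d1 [Fintype S] (x : S) : ∑ s, d1 x s = 1 := by
  simp [d1]

theorem d2_nonneg {x y : S} {px py : ℝ} (hx : 0 ≤ px) (hy : 0 ≤ py) (s : S) :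
    0 ≤ d2 x y px py s := by
  unfold d2; split_ifs <;> linarith

theorem sum_d2 [Fintype S] (x y : S) (px py : ℝ) : ∑ s, d2 x y px py s = px + py := by
  simp [d2, Finset.sum_add_distrib]

end Distributions

section Example

open St8

theorem M8_closedUnder_q3 : ClosedUnder M8.toMDP.chain {q3} := by
  rintro a rfl b hb
  cases b <;> simp_all [MDP.chain, MDP.K, M8, P8, d1]

theorem M8_closedUnder_q4 : ClosedUnder M8.toMDP.chain {q4} := by
  rintro a rfl b hb
  cases b <;> simp_all [MDP.chain, MDP.K, M8, P8, d1]

theorem M8_closedUnder_q2_q3_q4 : ClosedUnder M8.toMDP.chain {q2, q3, q4} := by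
  rintro a ha b hb
  rcases ha with rfl | rfl | rfl <;> cases b <;> simp_all [MDP.chain, MDP.K, M8, P8, d1, d2]

theorem M8_chain_s0_ne_zero {b : St8} (hb : M8.toMDP.chain s0 b ≠ 0) : b = q1 ∨ b = q2 := by
  cases b <;> simp_all [MDP.chain, MDP.K, M8, P8, d2]

theorem M8_chain_q1_ne_zero {b : St8} (hb : M8.toMDP.chain q1 b ≠ 0) : b = q3 ∨ b = q4 := by
  cases b <;> simp_all [MDP.chain, MDP.K, M8, P8, d2]

theorem M8_chain_q4_q4 : M8.toMDP.chain q4 q4 = 1 := by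
  simp [MDP.chain, MDP.K, M8, P8, d1]

theorem M8_isFirstHit_q4_from_s0 {u : List St8}
    (hu : IsFirstHit {h | h.getLast? = some q4} [s0] u)
    (hne : pathProb M8.toMDP.chain s0 u ≠ 0) : u = [q1, q4] ∨ u = [q2, q4] := by
  obtain ⟨v, rfl, hq4⟩ := isFirstHit_getLast?_eq_iff.mp hu
  rcases v with _ | ⟨a, _ | ⟨b, w⟩⟩
  · simp [pathProb, MDP.chain, MDP.K, M8, P8, d2] at hne
  · simp only [List.cons_append, pathProb, mul_ne_zero_iff] at hne
    rcases M8_chain_s0_ne_zero hne.1 with rfl | rfl <;> simp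
  · exfalso
    simp only [List.cons_append, pathProb, mul_ne_zero_iff] at hne
    obtain ⟨ha, hb, hw⟩ := hne
    have hb3 : b = q3 := by
      rcases M8_chain_s0_ne_zero ha with rfl | rfl <;> cases b <;>
        simp_all [MDP.chain, MDP.K, M8, P8, d2]
    subst hb3
    simpa using M8_closedUnder_q3.forall_mem_of_pathProb_ne_zero rfl hw q4 (by simp)

theorem M8_isFirstHit_q1_from_s0 {u : List St8}
    (hu : IsFirstHit {h | h.getLast? = some q1} [s0] u)
    (hne : pathProb M8.toMDP.chain s0 u ≠ 0) : u = [q1] := by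
  obtain ⟨v, rfl, hq1⟩ := isFirstHit_getLast?_eq_iff.mp hu
  rcases v with _ | ⟨a, w⟩
  · rfl
  · exfalso
    simp only [List.cons_append, pathProb, mul_ne_zero_iff] at hne
    have ha : a = q2 := (M8_chain_s0_ne_zero hne.1).resolve_left (by rintro rfl; simp at hq1)
    subst ha
    simpa using M8_closedUnder_q2_q3_q4.forall_mem_of_pathProb_ne_zero (by simp) hne.2 q1 (by simp)

theorem M8_isFirstHit_from_q1 {Tgt : Set (List St8)} (hT : ∀ h ∈ Tgt, h.getLast? ≠ some q3)
    {u : List St8} (hu : IsFirstHit Tgt [q1] u) (hne : pathProb M8.toMDP.chain q1 u ≠ 0) :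
    u = List.replicate u.length q4 := by
  obtain ⟨a, w, rfl⟩ := List.exists_cons_of_ne_nil hu.1
  rw [pathProb, mul_ne_zero_iff] at hne
  rcases M8_chain_q1_ne_zero hne.1 with rfl | rfl
  · refine absurd ?_ (hT _ hu.2.1)
    rw [M8_closedUnder_q3.eq_replicate_of_pathProb_ne_zero hne.2, ← List.replicate_succ,
      List.getLast?_append, List.getLast?_replicate]
    simp
  · rw [M8_closedUnder_q4.eq_replicate_of_pathProb_ne_zero hne.2]
    simp [List.replicate_succ]

theorem M8_isFirstHit_from_q1_unique {Tgt : Set (List St8)}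
    (hT : ∀ h ∈ Tgt, h.getLast? ≠ some q3) {u v : List St8}
    (hu : IsFirstHit Tgt [q1] u) (hv : IsFirstHit Tgt [q1] v)
    (hneu : pathProb M8.toMDP.chain q1 u ≠ 0) (hnev : pathProb M8.toMDP.chain q1 v ≠ 0) :
    u = v := by
  have hu' := M8_isFirstHit_from_q1 hT hu hneu
  have hv' := M8_isFirstHit_from_q1 hT hv hnev
  rcases le_total u.length v.length with hle | hle
  · refine hu.eq_of_prefix hv ?_
    rw [hv']
    exact List.prefix_replicate_iff.mpr ⟨hle, hu'⟩
  · refine (hv.eq_of_prefix hu ?_).symm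
    rw [hu']
    exact List.prefix_replicate_iff.mpr ⟨hle, hv'⟩

theorem M8_pathProb_q1_of_isFirstHit {Tgt : Set (List St8)}
    (hT : ∀ h ∈ Tgt, h.getLast? ≠ some q3) {u : List St8} (hu : IsFirstHit Tgt [q1] u) (hne : pathProb M8.toMDP.chain q1 u ≠ 0) :
    pathProb M8.toMDP.chain q1 u = 0.2 := by
  obtain ⟨n, hn⟩ := Nat.exists_eq_succ_of_ne_zero (List.length_pos_of_ne_nil hu.1).ne'
  rw [M8_isFirstHit_from_q1 hT hu hne, hn, List.replicate_succ, pathProb, pathProb_replicate,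
    M8_chain_q4_q4, one_pow, mul_one]
  simp [MDP.chain, MDP.K, M8, P8, d2]

theorem M8_wellFormed : M8.toMDP.WellFormed := by
  refine ⟨fun s a d hd => ?_, fun s => ⟨(), by cases s <;> simp [M8, P8]⟩⟩
  cases s <;> simp only [M8, P8, Option.some.injEq] at hd <;> subst hd
  all_goals first
    | exact ⟨d2_nonneg (by norm_num) (by norm_num), by rw [sum_d2]; norm_num⟩
    | exact ⟨d1_nonneg, sum_d1 _⟩

noncomputable def M8_policy : M8.toMDP.Policy where
  f _ _ := 1
  nonneg _ _ := zero_le_one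
  sum_one _ := by simp
  support _ s _ _ hP := by cases s <;> simp [M8, P8] at hP

variable (fp : M8.toMDP.Policy)

theorem M8_reachP_s0_q4 : reachP M8.toMDP.K fp.f [s0] {h | h.getLast? = some q4} = 0.68 := by
  have hfirst : ∀ u ∈ ({[q1, q4], [q2, q4]} : Finset (List St8)),
      IsFirstHit {h | h.getLast? = some q4} [s0] u := by
    simp only [Finset.mem_insert, Finset.mem_singleton]
    rintro u (rfl | rfl) <;> exact isFirstHit_getLast?_eq_iff.mpr ⟨[_], rfl, by simp⟩
  rw [reachP_eq_sum _ hfirst fun u hu hnot => by_contra fun hne => ?_, Finset.sum_pair (by simp),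
    fp.contP_singleton_eq_pathProb, fp.contP_singleton_eq_pathProb]
  · simp [pathProb, MDP.chain, MDP.K, M8, P8, d2]
    norm_num
  · rw [fp.contP_singleton_eq_pathProb] at hne
    rcases M8_isFirstHit_q4_from_s0 hu hne with rfl | rfl <;> simp at hnot

theorem M8_reachP_s0_q1 : reachP M8.toMDP.K fp.f [s0] {h | h.getLast? = some q1} = 0.2 := by
  rw [reachP_eq_of_unique (u₀ := [q1]) (isFirstHit_getLast?_eq_iff.mpr ⟨[], rfl, by simp⟩)
    fun u hu hne => M8_isFirstHit_q1_from_s0 hu (by rwa [fp.contP_singleton_eq_pathProb] at hne),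
    fp.contP_singleton_eq_pathProb]
  simp [pathProb, MDP.chain, MDP.K, M8, P8, d2]

theorem M8_reachP_q1_q4 : reachP M8.toMDP.K fp.f [q1] {h | h.getLast? = some q4} = 0.2 := by
  have hT : ∀ h ∈ {h : List St8 | h.getLast? = some q4}, h.getLast? ≠ some q3 :=
    fun h hh => by simp [show h.getLast? = some q4 from hh]
  have hq4 : IsFirstHit {h | h.getLast? = some q4} [q1] [q4] :=
    isFirstHit_getLast?_eq_iff.mpr ⟨[], rfl, by simp⟩
  have hq4_pos : pathProb M8.toMDP.chain q1 [q4] ≠ 0 := by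
    simp [pathProb, MDP.chain, MDP.K, M8, P8, d2]
    norm_num
  rw [reachP_eq_of_unique hq4 fun u hu hne => M8_isFirstHit_from_q1_unique hT hu hq4
    (by rwa [fp.contP_singleton_eq_pathProb] at hne) hq4_pos, fp.contP_singleton_eq_pathProb,
    M8_pathProb_q1_of_isFirstHit hT hq4 hq4_pos]

theorem M8_reachP_q1_le {Tgt : Set (List St8)} (hT : ∀ h ∈ Tgt, h.getLast? ≠ some q3) :
    reachP M8.toMDP.K fp.f [q1] Tgt ≤ 0.2 := by
  refine reachP_le_of_unique (by norm_num) (fun u v hu hv hneu hnev => ?_) fun u hu hne => ?_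
  · rw [fp.contP_singleton_eq_pathProb] at hneu hnev
    exact M8_isFirstHit_from_q1_unique hT hu hv hneu hnev
  · rw [fp.contP_singleton_eq_pathProb] at hne ⊢
    exact (M8_pathProb_q1_of_isFirstHit hT hu hne).le

theorem M8_riskAverseFrom_s0 :
    RiskAverseFrom M8 fp (fun _ => 2) (fun h => decide (h.getLast? = some q4)) 0.68 s0 where
  bounded := ⟨0, fun π _ _ n => by simp⟩
  l_even _ := even_two
  goal_label h s hs hq4 := by
    obtain rfl : s = q4 := Option.some.inj (hs.symm.trans (of_decide_eq_true hq4))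
    exact ⟨le_rfl, even_two⟩
  odd_label h s _ hodd := by
    cases s <;> simp_all [M8, C8, Nat.odd_iff]
  reach_goal t _ := by
    simp only [decide_eq_true_eq]
    rintro (rfl | hq4)
    · exact (M8_reachP_s0_q4 fp).ge
    · rw [fp.reachP_getLast?_eq_one M8_chain_q4_q4 M8_closedUnder_q4 hq4]
      norm_num

theorem M8_not_riskAverseFrom_q1 {l : List St8 → ℕ} {l' : List St8 → Bool} :
    ¬ RiskAverseFrom M8 fp l l' 0.68 q1 := by
  intro hra
  have hT : ∀ h ∈ {h | l' h = true}, h.getLast? ≠ some q3 := fun h hh hq3 => by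
    simpa [M8, C8] using (hra.goal_label h q3 hq3 hh).2
  linarith [hra.reach_goal [q1] rfl (Or.inl rfl), M8_reachP_q1_le fp hT]

end Example

/-- In the parity MDP of Figure 2: the MDP is well-formed; (i) it admits
a `0.68`-risk-averse policy from `s0` (and the probability of reaching `q4` from `s0` is
`0.2·0.2 + 0.8·0.8 = 0.68` under any policy); (ii) under any policy, `q1` is reached from
`s0` with positive probability; (iii) the probability of reaching `q4` from `q1` is only
`0.2`, and `q1` admits no `0.68`-risk-averse policy as initial state. -/
theorem example_nonWinning_state_reached :
    M8.toMDP.WellFormed ∧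
    (∃ (fp : M8.toMDP.Policy) (l : List St8 → ℕ) (l' : List St8 → Bool),
      RiskAverseFrom M8 fp l l' 0.68 St8.s0) ∧
    (∀ fp : M8.toMDP.Policy,
      reachP M8.toMDP.K fp.f [St8.s0] {h | h.getLast? = some St8.q4} = 0.68) ∧
    (∀ fp : M8.toMDP.Policy,
      0 < reachP M8.toMDP.K fp.f [St8.s0] {h | h.getLast? = some St8.q1}) ∧
    (∀ fp : M8.toMDP.Policy,
      reachP M8.toMDP.K fp.f [St8.q1] {h | h.getLast? = some St8.q4} = 0.2) ∧
    ¬ ∃ (fp : M8.toMDP.Policy) (l : List St8 → ℕ) (l' : List St8 → Bool),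
      RiskAverseFrom M8 fp l l' 0.68 St8.q1 :=
  ⟨M8_wellFormed, ⟨M8_policy, _, _, M8_riskAverseFrom_s0 M8_policy⟩, M8_reachP_s0_q4,
    fun fp => by rw [M8_reachP_s0_q1]; norm_num, M8_reachP_q1_q4,
    fun ⟨fp, _, _, hra⟩ => M8_not_riskAverseFrom_q1 fp hra⟩
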